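/- arXiv:1203.5581 — 5 statements merged into one kernel-verified Lean document; each statement's English description precedes it below -/
import Mathlib

section
/- If N is a natural number with 2·|ε|·N ≤ 1, then for every n ≤ N and every x ∈ ℤ one has 0 ≤ P(n, x) ≤ 1, so the recurrence defines genuine probabilities. -/
/-- The discrete stochastic process with memory: binomial transfer probabilities
with coupling `ε`. -/
noncomputable def P (ε : ℝ) : ℕ → ℤ → ℝ
  | 0, x => if x = 0 then 1 else 0
  | n + 1, x =>
      P ε n (x + 1) * (1 / 2 - ((x : ℝ) + 1) * ε) +
      P ε n (x - 1) * (1 / 2 + ((x : ℝ) - 1) * ε)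

lemma P_eq_zero (ε : ℝ) : ∀ n : ℕ, ∀ x : ℤ, (n : ℤ) < |x| → P ε n x = 0 := by
  intro n
  induction n with
  | zero =>
    intro x hx
    simp only [P]
    have : x ≠ 0 := by intro h; simp [h] at hx
    simp [this]
  | succ n ih =>
    intro x hx
    have h1 : (n : ℤ) < |x + 1| := by
      rcases abs_cases x with ⟨h, h'⟩ | ⟨h, h'⟩ <;> push_cast at hx ⊢ <;>
        rcases abs_cases (x+1) with ⟨g, g'⟩ | ⟨g, g'⟩ <;> omega
    have h2 : (n : ℤ) < |x - 1| := by
      rcases abs_cases x with ⟨h, h'⟩ | ⟨h, h'⟩ <;> push_cast at hx ⊢ <;>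
        rcases abs_cases (x-1) with ⟨g, g'⟩ | ⟨g, g'⟩ <;> omega
    simp only [P, ih _ h1, ih _ h2, zero_mul, add_zero]

lemma P_sum (ε : ℝ) : ∀ n : ℕ, ∀ s : Finset ℤ,
    Finset.Icc (-(n : ℤ)) n ⊆ s → ∑ x ∈ s, P ε n x = 1 := by
  intro n
  induction n with
  | zero =>
    intro s hs
    have h0 : (0 : ℤ) ∈ s := hs (by simp)
    rw [Finset.sum_eq_single_of_mem 0 h0]
    · simp [P]
    · intro b _ hb; simp [P, hb]
  | succ n ih =>
    intro s hs
    have restrict : ∀ f : ℤ → ℝ, ∀ t : Finset ℤ, Finset.Icc (-(n:ℤ)) n ⊆ t →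
        ∑ y ∈ t, P ε n y * f y = ∑ y ∈ Finset.Icc (-(n:ℤ)) n, P ε n y * f y := by
      intro f t ht
      refine (Finset.sum_subset ht ?_).symm
      intro y _ hy
      have : (n : ℤ) < |y| := by
        simp only [Finset.mem_Icc, not_and_or, not_le] at hy
        rcases abs_cases y with ⟨h, h'⟩ | ⟨h, h'⟩ <;> omega
      rw [P_eq_zero ε n y this, zero_mul]
    have hmul : ∀ c : ℤ, Finset.Icc (-(n:ℤ)) n ⊆ s.map (addRightEmbedding c) ∨ True := by
      intro c; exact Or.inr trivial
    have hsub1 : Finset.Icc (-(n:ℤ)) n ⊆ s.map (addRightEmbedding 1) := by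
      intro y hy
      simp only [Finset.mem_map, addRightEmbedding_apply]
      refine ⟨y - 1, hs ?_, by ring⟩
      simp only [Finset.mem_Icc] at hy ⊢
      push_cast; omega
    have hsub2 : Finset.Icc (-(n:ℤ)) n ⊆ s.map (addRightEmbedding (-1)) := by
      intro y hy
      simp only [Finset.mem_map, addRightEmbedding_apply]
      refine ⟨y + 1, hs ?_, by ring⟩
      simp only [Finset.mem_Icc] at hy ⊢
      push_cast; omega
    have e1 : ∑ x ∈ s, P ε n (x + 1) * (1 / 2 - ((x : ℝ) + 1) * ε)
        = ∑ y ∈ s.map (addRightEmbedding 1), P ε n y * (1 / 2 - (y : ℝ) * ε) := by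
      rw [Finset.sum_map]
      apply Finset.sum_congr rfl
      intro x _
      simp only [addRightEmbedding_apply]
      push_cast; ring_nf
    have e2 : ∑ x ∈ s, P ε n (x - 1) * (1 / 2 + ((x : ℝ) - 1) * ε)
        = ∑ y ∈ s.map (addRightEmbedding (-1)), P ε n y * (1 / 2 + (y : ℝ) * ε) := by
      rw [Finset.sum_map]
      apply Finset.sum_congr rfl
      intro x _
      simp only [addRightEmbedding_apply]
      push_cast; ring_nf
    have : ∑ x ∈ s, P ε (n + 1) x
        = ∑ y ∈ Finset.Icc (-(n:ℤ)) n, P ε n y * (1 / 2 - (y : ℝ) * ε)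
        + ∑ y ∈ Finset.Icc (-(n:ℤ)) n, P ε n y * (1 / 2 + (y : ℝ) * ε) := by
      simp only [P]
      rw [Finset.sum_add_distrib, e1, e2, restrict _ _ hsub1, restrict _ _ hsub2]
    rw [this, ← Finset.sum_add_distrib]
    have : ∀ y ∈ Finset.Icc (-(n:ℤ)) n,
        P ε n y * (1 / 2 - (y : ℝ) * ε) + P ε n y * (1 / 2 + (y : ℝ) * ε) = P ε n y := by
      intro y _; ring
    rw [Finset.sum_congr rfl this]
    exact ih _ (le_refl _)

/-- If `2·|ε|·N ≤ 1`, then for every `n ≤ N` and every `x ∈ ℤ`,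
`0 ≤ P(n, x) ≤ 1`: the recurrence defines genuine probabilities. -/
theorem P_mem_unitInterval (ε : ℝ) (N : ℕ) (hε : 2 * |ε| * N ≤ 1) :
    ∀ n ≤ N, ∀ x : ℤ, 0 ≤ P ε n x ∧ P ε n x ≤ 1 := by
  have hcoef : ∀ y : ℤ, |y| ≤ (N : ℤ) → |(y : ℝ) * ε| ≤ 1 / 2 := by
    intro y hy
    rw [abs_mul]
    have h1 : |(y : ℝ)| ≤ (N : ℝ) := by
      rw [← Int.cast_abs]; exact_mod_cast hy
    calc |(y:ℝ)| * |ε| ≤ (N:ℝ) * |ε| := by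
          apply mul_le_mul_of_nonneg_right h1 (abs_nonneg _)
      _ ≤ 1 / 2 := by nlinarith [abs_nonneg ε]
  have nonneg : ∀ n ≤ N, ∀ x : ℤ, 0 ≤ P ε n x := by
    intro n
    induction n with
    | zero => intro _ x; simp only [P]; positivity
    | succ n ih =>
      intro hn x
      have ih' := ih (le_of_lt (Nat.lt_of_succ_le hn))
      have term : ∀ y : ℤ, ∀ c : ℝ, |c| ≤ 1/2 → (∀ z : ℝ, True) →
          0 ≤ P ε n y * (1 / 2 + c) := by
        intro y c hc _
        apply mul_nonneg (ih' y)
        have := abs_le.mp hc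
        linarith [this.1]
      simp only [P]
      have t1 : 0 ≤ P ε n (x + 1) * (1 / 2 - ((x : ℝ) + 1) * ε) := by
        by_cases h : |x + 1| ≤ (n : ℤ)
        · apply mul_nonneg (ih' _)
          have hb : |((x + 1 : ℤ) : ℝ) * ε| ≤ 1 / 2 :=
            hcoef _ (le_trans h (by exact_mod_cast Nat.le_of_succ_le hn))
          push_cast at hb
          have := (abs_le.mp hb).2
          linarith
        · rw [P_eq_zero ε n _ (by omega), zero_mul]
      have t2 : 0 ≤ P ε n (x - 1) * (1 / 2 + ((x : ℝ) - 1) * ε) := by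
        by_cases h : |x - 1| ≤ (n : ℤ)
        · apply mul_nonneg (ih' _)
          have hb : |((x - 1 : ℤ) : ℝ) * ε| ≤ 1 / 2 :=
            hcoef _ (le_trans h (by exact_mod_cast Nat.le_of_succ_le hn))
          push_cast at hb
          have := (abs_le.mp hb).1
          linarith
        · rw [P_eq_zero ε n _ (by omega), zero_mul]
      linarith
  intro n hn x
  refine ⟨nonneg n hn x, ?_⟩
  by_cases hx : x ∈ Finset.Icc (-(n:ℤ)) n
  · have hsum := P_sum ε n (Finset.Icc (-(n:ℤ)) n) (le_refl _)
    calc P ε n x ≤ ∑ y ∈ Finset.Icc (-(n:ℤ)) n, P ε n y :=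
          Finset.single_le_sum (fun y _ => nonneg n hn y) hx
      _ = 1 := hsum
  · rw [P_eq_zero ε n x ?_]
    · norm_num
    · simp only [Finset.mem_Icc, not_and_or, not_le] at hx
      rcases abs_cases x with ⟨h, h'⟩ | ⟨h, h'⟩ <;> omega
end

section
/- All odd moments vanish: for every natural number n and every natural number k, m_{2k+1}(n) = Σ_{x ∈ ℤ} x^{2k+1} · P(n, x) = 0. In particular the mean m₁(n) and the third moment m₃(n) are zero. -/
/-- all odd moments vanish:
`m_{2k+1}(n) = Σ_{x ∈ ℤ} x^{2k+1} · P(n, x) = 0`. -/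
theorem odd_moments_vanish (ε : ℝ) (n k : ℕ) :
    ∑' x : ℤ, (x : ℝ) ^ (2 * k + 1) * P ε n x = 0 := by
  have hsymm : ∀ m : ℕ, ∀ x : ℤ, P ε m (-x) = P ε m x := by
    intro m
    induction m with
    | zero =>
        intro x
        simp [P, neg_eq_zero]
    | succ m ih =>
        intro x
        show P ε m (-x + 1) * (1 / 2 - ((-x : ℤ) + 1) * ε) +
            P ε m (-x - 1) * (1 / 2 + ((-x : ℤ) - 1) * ε) =
            P ε m (x + 1) * (1 / 2 - ((x : ℤ) + 1) * ε) +
            P ε m (x - 1) * (1 / 2 + ((x : ℤ) - 1) * ε)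
        have h1 : -x + 1 = -(x - 1) := by ring
        have h2 : -x - 1 = -(x + 1) := by ring
        rw [h1, h2, ih, ih]
        push_cast
        ring
  have hodd : Odd (2 * k + 1) := ⟨k, by ring⟩
  set f : ℤ → ℝ := fun x => (x : ℝ) ^ (2 * k + 1) * P ε n x with hf
  have h1 : ∑' x : ℤ, f x = ∑' x : ℤ, f (-x) :=
    ((Equiv.neg ℤ).tsum_eq f).symm
  have h2 : ∀ x : ℤ, f (-x) = -f x := by
    intro x
    simp only [hf]
    rw [hsymm n x]
    push_cast
    rw [hodd.neg_pow]
    ring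
  have h3 : ∑' x : ℤ, f (-x) = -∑' x : ℤ, f x := by
    simp_rw [h2]
    exact tsum_neg
  have : ∑' x : ℤ, f x = -∑' x : ℤ, f x := h1.trans h3
  linarith
end

section
/- Fix ε ≠ 0. For q > 1 define Y_n(q) = ε^{−n} · q^{−1/(2ε)} · (q² − 1)^{1/(2ε)} · Z_n(q), where the real powers of the positive quantities q and q² − 1 are taken. Then for every natural number n and every q > 1, Y_{n+1}(q) = (q² − 1) · Y_n'(q). -/
/-- The generating function `Z_n(q) = Σ_{x ∈ ℤ} P(n, x) · q^x` (integer powers). -/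
noncomputable def Z (ε : ℝ) (n : ℕ) (q : ℝ) : ℝ := ∑' x : ℤ, P ε n x * q ^ x

/-- The substituted function `Y_n(q) = ε^{−n} · q^{−1/(2ε)} · (q² − 1)^{1/(2ε)} · Z_n(q)`,
with real powers of the positive quantities `q` and `q² − 1` (for `q > 1`). -/
noncomputable def Y (ε : ℝ) (n : ℕ) (q : ℝ) : ℝ :=
  ε ^ (-(n : ℤ)) * q ^ (-(1 / (2 * ε))) * (q ^ 2 - 1) ^ (1 / (2 * ε)) * Z ε n q

/-!
`Z_n` is a Laurent polynomial, since after `n` steps the walk is supported in `[-n, n]`.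
Shifting the summation index in the defining recurrence of `P` gives the first-order
recurrence `Z_{n+1} = (q + q⁻¹)/2 · Z_n + ε (q² - 1) Z_n'`. The prefactor
`w(q) = q^{-a} (q² - 1)^a` with `a = 1/(2ε)` satisfies `(q² - 1) w' = a (q + q⁻¹) w`,
so multiplying by `w` absorbs the zeroth-order term into a derivative, and the factor
`ε^{-n}` absorbs the remaining `ε`.
-/

section Walk

variable (ε : ℝ)

lemma P_eq_zero_of_notMem_Icc {n : ℕ} {x : ℤ} (hx : x ∉ Finset.Icc (-(n : ℤ)) n) :
    P ε n x = 0 := by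
  induction n generalizing x with
  | zero => simp_all [P]
  | succ n ih =>
    simp only [Finset.mem_Icc, not_and_or, not_le] at hx ih
    rw [P, ih (by push_cast at hx; omega), ih (by push_cast at hx; omega)]
    ring

lemma summable_P_mul (n : ℕ) (f : ℤ → ℝ) : Summable fun x => P ε n x * f x :=
  summable_of_ne_finset_zero fun _ hx => by rw [P_eq_zero_of_notMem_Icc ε hx, zero_mul]

lemma tsum_P_mul_eq_sum (n : ℕ) (f : ℤ → ℝ) :
    ∑' x, P ε n x * f x = ∑ x ∈ Finset.Icc (-(n : ℤ)) n, P ε n x * f x :=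
  tsum_eq_sum fun _ hx => by rw [P_eq_zero_of_notMem_Icc ε hx, zero_mul]

lemma hasDerivAt_Z (n : ℕ) {q : ℝ} (hq : q ≠ 0) :
    HasDerivAt (Z ε n) (∑' x, P ε n x * (x * q ^ (x - 1))) q := by
  have hZ : Z ε n = fun t => ∑ x ∈ Finset.Icc (-(n : ℤ)) n, P ε n x * t ^ x :=
    funext fun t => tsum_P_mul_eq_sum ε n _
  rw [hZ, tsum_P_mul_eq_sum]
  exact HasDerivAt.fun_sum fun x _ => (hasDerivAt_zpow x q (Or.inl hq)).const_mul _

lemma Z_succ (n : ℕ) {q : ℝ} (hq : q ≠ 0) :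
    Z ε (n + 1) q = (q + q⁻¹) / 2 * Z ε n q + ε * (q ^ 2 - 1) * deriv (Z ε n) q := by
  set down : ℤ → ℝ := fun y => P ε n y * ((1 / 2 - y * ε) * q ^ (y - 1))
  set up : ℤ → ℝ := fun y => P ε n y * ((1 / 2 + y * ε) * q ^ (y + 1))
  have hdown : Summable down := summable_P_mul ε n _
  have hup : Summable up := summable_P_mul ε n _
  have hdown' : Summable fun x : ℤ => down (x + 1) :=
    hdown.comp_injective (add_left_injective 1)
  have hup' : Summable fun x : ℤ => up (x - 1) :=
    hup.comp_injective (sub_left_injective (b := 1))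
  have hshift : Z ε (n + 1) q = ∑' y, (down y + up y) := calc
    Z ε (n + 1) q = ∑' x : ℤ, (down (x + 1) + up (x - 1)) := by
      refine tsum_congr fun x => ?_
      simp only [P, down, up, add_sub_cancel_right, sub_add_cancel]
      push_cast
      ring
    _ = ∑' y, (down y + up y) := by
      rw [hdown'.tsum_add hup', hdown.tsum_add hup]
      exact congrArg₂ (· + ·) ((Equiv.addRight 1).tsum_eq down) ((Equiv.subRight 1).tsum_eq up)
  rw [hshift, (hasDerivAt_Z ε n hq).deriv, Z, ← tsum_mul_left, ← tsum_mul_left,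
    ← ((summable_P_mul ε n _).mul_left _).tsum_add ((summable_P_mul ε n _).mul_left _)]
  refine tsum_congr fun y => ?_
  simp only [down, up, zpow_sub_one₀ hq, zpow_add_one₀ hq]
  field_simp
  ring

end Walk

lemma hasDerivAt_rpow_neg_mul_sq_sub_one_rpow (a : ℝ) {q : ℝ} (hq : 1 < q) :
    HasDerivAt (fun t : ℝ => t ^ (-a) * (t ^ 2 - 1) ^ a)
      (a * (q + q⁻¹) / (q ^ 2 - 1) * (q ^ (-a) * (q ^ 2 - 1) ^ a)) q := by
  have hq0 : 0 < q := by linarith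
  have hq2 : 0 < q ^ 2 - 1 := by nlinarith
  have hsq : HasDerivAt (fun t : ℝ => t ^ 2 - 1) (2 * q) q := by
    simpa using (hasDerivAt_pow 2 q).sub_const 1
  refine ((Real.hasDerivAt_rpow_const (p := -a) (Or.inl hq0.ne')).mul
    ((Real.hasDerivAt_rpow_const (p := a) (Or.inl hq2.ne')).comp q hsq)).congr_deriv ?_
  rw [Function.comp_apply, Real.rpow_sub hq0, Real.rpow_sub hq2, Real.rpow_one, Real.rpow_one]
  field_simp
  ring

/-- for `ε ≠ 0`, `Y_{n+1}(q) = (q² − 1) · Y_n'(q)` for every `q > 1`. -/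
theorem Y_recurrence (ε : ℝ) (hε : ε ≠ 0) (n : ℕ) (q : ℝ) (hq : 1 < q) :
    Y ε (n + 1) q = (q ^ 2 - 1) * deriv (Y ε n) q := by
  have hq0 : q ≠ 0 := by positivity
  have hq2 : q ^ 2 - 1 ≠ 0 := by nlinarith
  set a := 1 / (2 * ε)
  set w : ℝ → ℝ := fun t => t ^ (-a) * (t ^ 2 - 1) ^ a
  have hY : Y ε n = fun t => ε ^ (-(n : ℤ)) * (w t * Z ε n t) := by
    funext t
    simp only [Y, w, a]
    ring
  have hY' : HasDerivAt (Y ε n) (ε ^ (-(n : ℤ)) * (a * (q + q⁻¹) / (q ^ 2 - 1) * w q * Z ε n q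
      + w q * deriv (Z ε n) q)) q := by
    rw [hY, (hasDerivAt_Z ε n hq0).deriv]
    exact ((hasDerivAt_rpow_neg_mul_sq_sub_one_rpow a hq).mul (hasDerivAt_Z ε n hq0)).const_mul _
  rw [hY'.deriv]
  simp only [Y, Z_succ ε n hq0, zpow_neg, zpow_natCast, pow_succ, w, a]
  field_simp
end

section
/- Small-ε expansion of the variance: for every natural number N ≥ 1, the second moment m₂(N), regarded as a function of ε, is a polynomial in ε, and there exists a polynomial function R : ℝ → ℝ such that m₂(N) = N + 2N(N−1)·ε + (8/3)·N(N−1)(N−2)·ε² + ε³·R(ε) for all ε ∈ ℝ. -/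
noncomputable def m (ε : ℝ) (k n : ℕ) : ℝ := ∑' x : ℤ, (x : ℝ) ^ k * P ε n x

theorem P_eq_zero_of_lt_natAbs (ε : ℝ) : ∀ (n : ℕ) (x : ℤ), n < x.natAbs → P ε n x = 0
  | 0, x, h => by simp [P, show x ≠ 0 by omega]
  | n + 1, x, h => by
      rw [P, P_eq_zero_of_lt_natAbs ε n (x + 1) (by omega),
        P_eq_zero_of_lt_natAbs ε n (x - 1) (by omega)]
      ring

theorem summable_mul_P (ε : ℝ) (n : ℕ) (g : ℤ → ℝ) :
    Summable fun x : ℤ => g x * P ε n x :=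
  summable_of_ne_finset_zero (s := Finset.Icc (-(n : ℤ)) n) fun x hx => by
    rw [P_eq_zero_of_lt_natAbs ε n x (by simp only [Finset.mem_Icc] at hx; omega), mul_zero]

theorem tsum_mul_P_succ (ε : ℝ) (n : ℕ) (g : ℤ → ℝ) :
    ∑' x : ℤ, g x * P ε (n + 1) x =
      ∑' y : ℤ, (g (y - 1) * (1 / 2 - y * ε) + g (y + 1) * (1 / 2 + y * ε)) * P ε n y := by
  have down : ∑' x : ℤ, g x * (P ε n (x + 1) * (1 / 2 - ((x : ℝ) + 1) * ε)) =
      ∑' y : ℤ, g (y - 1) * (1 / 2 - y * ε) * P ε n y := by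
    refine (tsum_congr fun x => ?_).trans
      ((Equiv.addRight (1 : ℤ)).tsum_eq fun y => g (y - 1) * (1 / 2 - y * ε) * P ε n y)
    simp only [Equiv.coe_addRight, add_sub_cancel_right]
    push_cast
    ring
  have up : ∑' x : ℤ, g x * (P ε n (x - 1) * (1 / 2 + ((x : ℝ) - 1) * ε)) =
      ∑' y : ℤ, g (y + 1) * (1 / 2 + y * ε) * P ε n y := by
    refine (tsum_congr fun x => ?_).trans
      ((Equiv.subRight (1 : ℤ)).tsum_eq fun y => g (y + 1) * (1 / 2 + y * ε) * P ε n y)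
    simp only [Equiv.subRight_apply, sub_add_cancel]
    push_cast
    ring
  have summable_shift (s : ℤ) (w : ℝ → ℝ) :
      Summable fun x : ℤ => g x * (P ε n (x + s) * w x) :=
    summable_of_ne_finset_zero (s := Finset.Icc (-(n : ℤ) - s) (n - s)) fun x hx => by
      rw [P_eq_zero_of_lt_natAbs ε n (x + s) (by simp only [Finset.mem_Icc] at hx; omega)]
      ring
  calc ∑' x : ℤ, g x * P ε (n + 1) x
      = ∑' x : ℤ, (g x * (P ε n (x + 1) * (1 / 2 - ((x : ℝ) + 1) * ε)) +
          g x * (P ε n (x - 1) * (1 / 2 + ((x : ℝ) - 1) * ε))) :=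
        tsum_congr fun x => by rw [P, mul_add]
    _ = _ := by
      rw [Summable.tsum_add _ _, down, up, ← Summable.tsum_add (summable_mul_P ε n _)
        (summable_mul_P ε n _)]
      · exact tsum_congr fun y => by ring
      · exact summable_shift 1 fun x => 1 / 2 - (x + 1) * ε
      · simpa only [← sub_eq_add_neg] using summable_shift (-1) fun x => 1 / 2 + (x - 1) * ε

theorem m_zero_eq_one (ε : ℝ) : ∀ n : ℕ, m ε 0 n = 1
  | 0 => by simp [m, P]
  | n + 1 => by
      rw [← m_zero_eq_one ε n, m, m, tsum_mul_P_succ]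
      exact tsum_congr fun y => by ring

theorem m_two_zero (ε : ℝ) : m ε 2 0 = 0 := by
  refine (tsum_congr fun x => ?_).trans tsum_zero
  by_cases hx : x = 0 <;> simp [P, hx]

theorem m_two_succ (ε : ℝ) (n : ℕ) : m ε 2 (n + 1) = (1 + 4 * ε) * m ε 2 n + 1 := by
  calc m ε 2 (n + 1)
      = ∑' y : ℤ, ((1 + 4 * ε) * ((y : ℝ) ^ 2 * P ε n y) + (y : ℝ) ^ 0 * P ε n y) := by
        rw [m, tsum_mul_P_succ]
        exact tsum_congr fun y => by push_cast; ring
    _ = (1 + 4 * ε) * m ε 2 n + m ε 0 n := by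
        rw [Summable.tsum_add ((summable_mul_P ε n _).mul_left _) (summable_mul_P ε n _),
          tsum_mul_left, m, m]
    _ = (1 + 4 * ε) * m ε 2 n + 1 := by rw [m_zero_eq_one]

theorem variance_small_eps_expansion_general (N : ℕ) :
    ∃ R : Polynomial ℝ, ∀ ε : ℝ,
      m ε 2 N =
        (N : ℝ) + 2 * (N : ℝ) * ((N : ℝ) - 1) * ε +
          (8 / 3) * (N : ℝ) * ((N : ℝ) - 1) * ((N : ℝ) - 2) * ε ^ 2 +
          ε ^ 3 * R.eval ε := by
  induction N with
  | zero => exact ⟨0, fun ε => by simp [m_two_zero]⟩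
  | succ N ih =>
    obtain ⟨R, hR⟩ := ih
    refine ⟨.C ((32 / 3 : ℝ) * N * (N - 1) * (N - 2)) + (1 + 4 * .X) * R, fun ε => ?_⟩
    rw [m_two_succ, hR]
    simp only [Polynomial.eval_add, Polynomial.eval_mul, Polynomial.eval_C, Polynomial.eval_one,
      Polynomial.eval_X, Polynomial.eval_ofNat]
    push_cast
    ring

/-- small-`ε` expansion of the variance. For `N ≥ 1`, `m₂(N)` is a
polynomial in `ε`:
`m₂(N) = N + 2N(N−1)·ε + (8/3)·N(N−1)(N−2)·ε² + ε³·R(ε)` with `R` a polynomial. -/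
theorem variance_small_eps_expansion (N : ℕ) (hN : 1 ≤ N) :
    ∃ R : Polynomial ℝ, ∀ ε : ℝ,
      m ε 2 N =
        (N : ℝ) + 2 * (N : ℝ) * ((N : ℝ) - 1) * ε +
          (8 / 3) * (N : ℝ) * ((N : ℝ) - 1) * ((N : ℝ) - 2) * ε ^ 2 +
          ε ^ 3 * R.eval ε :=
  variance_small_eps_expansion_general N
end

section
/- Asymptotic auto-correlation under the renormalized coupling: fix L ≥ 2 and κ with |κ| < 1/2, and for each N > L set ε = κ/N and consider paths of length N. Then lim_{N→∞} N · Σ_{s ∈ {−1,+1}^N} s_{N−L+1} · s_N · W_ε(s) = 2κ · (1 + 2κ · H(κ)), where H(κ) = lim_{N→∞} m₂(N; κ/N)/N (this limit exists). -/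
/-! Summing out the last step of a path multiplies any quantity by its one-step conditional
expectation under the weights `W`, which are exactly the transition probabilities of `P`.
This gives `m₂(n + 1) = (1 + 4ε) m₂(n) + 1`, so `m₂(n; ε) = Σ_{k<n} (1 + 4ε)^k`; the correlation
`E[s_{j+1} x_n]` equals `2ε m₂(j) + 1` at `n = j + 1` and gains a factor `1 + 2ε` per step;
and `E[s_{j+1} s_{n+1}] = 2ε E[s_{j+1} x_n]`. Hence, with `ε = κ/N`, the rescaled
auto-correlation is `2κ (1 + 2κ/N)^{L-2} (1 + 2κ m₂(N - L)/N)`, and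
`m₂(N - L; κ/N)/N → (e^{4κ} - 1)/(4κ)`, which is `H(κ)` (read as `1` at `κ = 0`). -/

open Filter

/-- The second moment with coupling `ε`: `m₂(n; ε) = Σ_{x ∈ ℤ} x² · P(n, x; ε)`. -/
noncomputable def m2 (ε : ℝ) (n : ℕ) : ℝ := ∑' x : ℤ, (x : ℝ) ^ 2 * P ε n x

/-- A single step of a binary path: `+1` or `−1`. -/
def step (b : Bool) : ℤ := if b then 1 else -1

/-- The displacement after `k` steps: `x_k(s) = s_1 + ⋯ + s_k` (with `x_0(s) = 0`). -/
def pos {N : ℕ} (s : Fin N → Bool) (k : ℕ) : ℤ :=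
  ∑ j ∈ Finset.univ.filter (fun j : Fin N => (j : ℕ) < k), step (s j)

/-- The weight of a path: `W_ε(s) = Π_{k=0}^{N−1} (1/2 + x_k(s) · ε · s_{k+1})`. -/
noncomputable def W (ε : ℝ) {N : ℕ} (s : Fin N → Bool) : ℝ :=
  ∏ k : Fin N, (1 / 2 + (pos s (k : ℕ) : ℝ) * ε * (step (s k) : ℝ))

open Finset Real Topology

lemma pos_snoc {n : ℕ} (s : Fin n → Bool) (b : Bool) (k : ℕ) :
    pos (Fin.snoc s b) k = pos s k + if n < k then step b else 0 := by
  simp only [pos, sum_filter, Fin.sum_univ_castSucc, Fin.snoc_castSucc, Fin.snoc_last,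
    Fin.val_castSucc, Fin.val_last]

lemma pos_of_le {n : ℕ} (s : Fin n → Bool) {k : ℕ} (h : n ≤ k) : pos s k = pos s n := by
  simp only [pos]
  congr 1
  ext j
  simp only [mem_filter, mem_univ, true_and, j.isLt, iff_true]
  omega

lemma pos_snoc_of_le {n : ℕ} (s : Fin n → Bool) (b : Bool) {k : ℕ} (hk : k ≤ n) :
    pos (Fin.snoc s b) k = pos s k := by
  simp [pos_snoc, hk.not_gt]

lemma pos_snoc_succ {n : ℕ} (s : Fin n → Bool) (b : Bool) :
    pos (Fin.snoc s b) (n + 1) = pos s n + step b := by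
  simp [pos_snoc, pos_of_le s n.le_succ]

lemma W_snoc (ε : ℝ) {n : ℕ} (s : Fin n → Bool) (b : Bool) :
    W ε (Fin.snoc s b) = W ε s * (1 / 2 + pos s n * ε * step b) := by
  simp only [W, Fin.prod_univ_castSucc, Fin.snoc_castSucc, Fin.snoc_last, Fin.val_castSucc,
    Fin.val_last, pos_snoc_of_le s b (Fin.is_le _)]

lemma sum_mul_W_succ (ε : ℝ) {n : ℕ} (f : (Fin (n + 1) → Bool) → ℝ) :
    ∑ s, f s * W ε s = ∑ s : Fin n → Bool, W ε s *
      (f (Fin.snoc s true) * (1 / 2 + pos s n * ε) +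
        f (Fin.snoc s false) * (1 / 2 - pos s n * ε)) := by
  rw [← (Fin.snocEquiv fun _ => Bool).sum_comp, Fintype.sum_prod_type, sum_comm]
  refine sum_congr rfl fun s _ => ?_
  simp only [Fintype.sum_bool]
  dsimp only [Fin.snocEquiv, Equiv.coe_fn_mk]
  rw [W_snoc, W_snoc]
  simp only [step]
  push_cast
  ring

lemma sum_W (ε : ℝ) (n : ℕ) : ∑ s : Fin n → Bool, W ε s = 1 := by
  induction n with
  | zero => simp [W]
  | succ n ih =>
    have h := sum_mul_W_succ ε (n := n) (fun _ => 1)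
    norm_num at h
    rw [h, ih]

lemma P_eq_sum_W (ε : ℝ) (n : ℕ) (x : ℤ) :
    P ε n x = ∑ s : Fin n → Bool with pos s n = x, W ε s := by
  induction n generalizing x with
  | zero => by_cases hx : x = 0 <;> simp [P, pos, W, hx, eq_comm]
  | succ n ih =>
    have hfilter : ∀ {m : ℕ} (y : ℤ), ∑ s : Fin m → Bool with pos s m = y, W ε s =
        ∑ s, (if pos s m = y then 1 else 0) * W ε s := fun _ => by
      simp only [sum_filter, boole_mul]; congr
    rw [P, ih, ih, hfilter, hfilter, hfilter, sum_mul_W_succ, sum_mul, sum_mul,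
      ← sum_add_distrib]
    refine sum_congr rfl fun s _ => ?_
    simp only [pos_snoc_succ, step]
    split_ifs <;> first | contradiction | omega | (subst_vars; push_cast; ring)

lemma m2_eq_sum_pos_sq_mul_W (ε : ℝ) (n : ℕ) :
    m2 ε n = ∑ s : Fin n → Bool, (pos s n : ℝ) ^ 2 * W ε s := by
  set range := univ.image fun s : Fin n → Bool => pos s n
  have hsupport : ∀ x ∉ range, (x : ℝ) ^ 2 * P ε n x = 0 := fun x hx => by
    have hfiber : ∀ s ∈ univ, ¬pos s n = x := fun s _ h =>
      hx (h ▸ mem_image_of_mem _ (mem_univ s))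
    rw [P_eq_sum_W, filter_false_of_mem hfiber, sum_empty, mul_zero]
  rw [m2, tsum_eq_sum hsupport, ← sum_fiberwise_of_maps_to (g := fun s => pos s n)
    (t := range) fun s _ => mem_image_of_mem _ (mem_univ s)]
  refine sum_congr rfl fun x _ => ?_
  rw [P_eq_sum_W, mul_sum]
  exact sum_congr rfl fun s hs => by rw [(mem_filter.1 hs).2]

lemma m2_eq_geom_sum (ε : ℝ) (n : ℕ) : m2 ε n = ∑ k ∈ range n, (1 + 4 * ε) ^ k := by
  rw [m2_eq_sum_pos_sq_mul_W]
  induction n with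
  | zero => simp [pos]
  | succ n ih =>
    calc _ = ∑ s : Fin n → Bool, ((1 + 4 * ε) * ((pos s n : ℝ) ^ 2 * W ε s) + W ε s) := by
          rw [sum_mul_W_succ]
          refine sum_congr rfl fun s _ => ?_
          simp only [pos_snoc_succ, step]
          push_cast
          ring
      _ = _ := by rw [sum_add_distrib, ← mul_sum, ih, sum_W, geom_sum_succ]

lemma sum_step_last_mul_pos_mul_W (ε : ℝ) (n : ℕ) :
    ∑ s : Fin (n + 1) → Bool, (step (s (Fin.last n)) : ℝ) * pos s (n + 1) * W ε s =
      2 * ε * m2 ε n + 1 := by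
  calc _ = ∑ s : Fin n → Bool, (2 * ε * ((pos s n : ℝ) ^ 2 * W ε s) + W ε s) := by
        rw [sum_mul_W_succ]
        refine sum_congr rfl fun s _ => ?_
        simp only [Fin.snoc_last, pos_snoc_succ, step]
        push_cast
        ring
    _ = _ := by rw [sum_add_distrib, ← mul_sum, ← m2_eq_sum_pos_sq_mul_W, sum_W]

lemma sum_step_castSucc_mul_pos_mul_W (ε : ℝ) {n : ℕ} (i : Fin n) :
    ∑ s : Fin (n + 1) → Bool, (step (s i.castSucc) : ℝ) * pos s (n + 1) * W ε s =
      (1 + 2 * ε) * ∑ s : Fin n → Bool, (step (s i) : ℝ) * pos s n * W ε s := by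
  rw [sum_mul_W_succ, mul_sum]
  refine sum_congr rfl fun s _ => ?_
  simp only [Fin.snoc_castSucc, pos_snoc_succ, step]
  push_cast
  ring

lemma sum_step_castSucc_mul_step_last_mul_W (ε : ℝ) {n : ℕ} (i : Fin n) :
    ∑ s : Fin (n + 1) → Bool, (step (s i.castSucc) : ℝ) * step (s (Fin.last n)) * W ε s =
      2 * ε * ∑ s : Fin n → Bool, (step (s i) : ℝ) * pos s n * W ε s := by
  rw [sum_mul_W_succ, mul_sum]
  refine sum_congr rfl fun s _ => ?_
  simp only [Fin.snoc_castSucc, Fin.snoc_last, step]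
  push_cast
  ring

lemma sum_step_mul_pos_mul_W (ε : ℝ) (j d : ℕ) :
    ∑ s : Fin (j + d + 1) → Bool, (step (s ⟨j, by omega⟩) : ℝ) * pos s (j + d + 1) * W ε s =
      (1 + 2 * ε) ^ d * (2 * ε * m2 ε j + 1) := by
  induction d with
  | zero => exact (sum_step_last_mul_pos_mul_W ε j).trans (one_mul _).symm
  | succ d ih =>
    rw [pow_succ', mul_assoc, ← ih]
    exact sum_step_castSucc_mul_pos_mul_W ε ⟨j, by omega⟩

lemma sum_step_mul_step_mul_W (ε : ℝ) {N L : ℕ} (hLN : L < N) (hL : 2 ≤ L) :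
    ∑ s : Fin N → Bool,
        (step (s ⟨N - L, by omega⟩) : ℝ) * (step (s ⟨N - 1, by omega⟩) : ℝ) * W ε s =
      2 * ε * ((1 + 2 * ε) ^ (L - 2) * (2 * ε * m2 ε (N - L) + 1)) := by
  obtain ⟨d, rfl⟩ : ∃ d, L = d + 2 := ⟨L - 2, by omega⟩
  obtain ⟨j, rfl⟩ : ∃ j, N = j + d + 2 := ⟨N - (d + 2), by omega⟩
  simp only [show j + d + 2 - (d + 2) = j by omega, show j + d + 2 - 1 = j + d + 1 by omega,
    show d + 2 - 2 = d by omega]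
  rw [← sum_step_mul_pos_mul_W]
  exact sum_step_castSucc_mul_step_last_mul_W ε ⟨j, by omega⟩

lemma tendsto_one_add_div_pow_sub (c : ℝ) (L : ℕ) :
    Tendsto (fun N : ℕ => (1 + c / N) ^ (N - L)) atTop (𝓝 (exp c)) := by
  have hbase : Tendsto (fun N : ℕ => 1 + c / N) atTop (𝓝 1) := by
    simpa using (tendsto_const_div_atTop_nhds_zero_nat c).const_add 1
  have hquot := (tendsto_one_add_div_pow_exp c).div (hbase.pow L) (by simp)
  rw [one_pow, div_one] at hquot
  refine hquot.congr' ?_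
  filter_upwards [hbase.eventually_ne one_ne_zero, eventually_ge_atTop L] with N hN hLN
  rw [Pi.div_apply, pow_sub₀ _ hN hLN, div_eq_mul_inv]

lemma tendsto_geom_sum_one_add_div (c : ℝ) (L : ℕ) :
    Tendsto (fun N : ℕ => (∑ k ∈ range (N - L), (1 + c / N) ^ k) / N) atTop
      (𝓝 (dslope exp 0 c)) := by
  rcases eq_or_ne c 0 with rfl | hc
  · rw [dslope_same, Real.deriv_exp, exp_zero]
    have hL : Tendsto (fun N : ℕ => 1 - (L : ℝ) / N) atTop (𝓝 1) := by
      simpa using (tendsto_const_div_atTop_nhds_zero_nat (L : ℝ)).const_sub 1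
    refine hL.congr' ?_
    filter_upwards [eventually_ge_atTop L, eventually_gt_atTop 0] with N hLN hN
    simp only [zero_div, add_zero, one_pow, sum_const, card_range, nsmul_eq_mul, mul_one,
      Nat.cast_sub hLN]
    field_simp
  · rw [dslope_of_ne _ hc, slope_def_field, exp_zero, sub_zero]
    refine (((tendsto_one_add_div_pow_sub c L).sub_const 1).div_const c).congr' ?_
    filter_upwards [eventually_gt_atTop 0] with N hN
    have hN' : (N : ℝ) ≠ 0 := by positivity
    rw [geom_sum_eq (by simp [hc, hN']), add_sub_cancel_left, div_div, div_mul_cancel₀ _ hN']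

lemma tendsto_m2_div (κ : ℝ) (L : ℕ) :
    Tendsto (fun N : ℕ => m2 (κ / N) (N - L) / N) atTop (𝓝 (dslope exp 0 (4 * κ))) := by
  simp only [m2_eq_geom_sum, mul_div_assoc']
  exact tendsto_geom_sum_one_add_div (4 * κ) L

-- The steps `s_{N−L+1}` and `s_N` are at 0-based indices `N−L` and `N−1`.
/-- asymptotic auto-correlation under the renormalized coupling
`ε = κ/N`: for fixed `L ≥ 2` and `|κ| < 1/2`,
`lim_{N→∞} N · Σ_s s_{N−L+1} · s_N · W_{κ/N}(s) = 2κ · (1 + 2κ·H(κ))` where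
`H(κ) = lim_{N→∞} m₂(N; κ/N)/N` (which exists). The steps `s_{N−L+1}` and `s_N`
are at 0-based indices `N−L` and `N−1`. -/
theorem autocorrelation_asymptotic (L : ℕ) (hL : 2 ≤ L) (κ : ℝ) :
    ∃ H : ℝ,
      Tendsto (fun N : ℕ => m2 (κ / N) N / N) atTop (nhds H) ∧
      Tendsto
        (fun N : ℕ =>
          if h : L < N then
            (N : ℝ) *
              ∑ s : Fin N → Bool,
                (step (s ⟨N - L, by omega⟩) : ℝ) * (step (s ⟨N - 1, by omega⟩) : ℝ) *
                  W (κ / N) s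
          else 0)
        atTop (nhds (2 * κ * (1 + 2 * κ * H))) := by
  refine ⟨dslope exp 0 (4 * κ), by simpa using tendsto_m2_div κ 0, ?_⟩
  have hpow : Tendsto (fun N : ℕ => (1 + 2 * κ / N) ^ (L - 2)) atTop (𝓝 1) := by
    simpa using ((tendsto_const_div_atTop_nhds_zero_nat (2 * κ)).const_add 1).pow (L - 2)
  have hlim := ((hpow.mul (((tendsto_m2_div κ L).const_mul (2 * κ)).const_add 1)).const_mul
    (2 * κ))
  rw [one_mul] at hlim
  refine hlim.congr' ?_
  filter_upwards [eventually_gt_atTop L] with N hLN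
  have hN : (N : ℝ) ≠ 0 := Nat.cast_ne_zero.2 (by omega)
  rw [dif_pos hLN, sum_step_mul_step_mul_W _ hLN hL]
  field_simp
  ring
end
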